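/- Every transitive subgroup of S_5 containing a 5-cycle is conjugate to one of: the cyclic group C_5, the dihedral group D_5 of order 10, the Frobenius group F_20 of order 20, the alternating group A_5, or S_5 itself. -/
import Mathlib


open Equiv

instance : Fact (Nat.Prime 5) := ⟨by norm_num⟩

/-- The cyclic group of order 5 in `Perm (ZMod 5)`, generated by translation. -/
noncomputable def C5 : Subgroup (Equiv.Perm (ZMod 5)) :=
  Subgroup.zpowers (Equiv.addLeft (1 : ZMod 5))

/-- The dihedral group of order 10 in `Perm (ZMod 5)`, generated by translation and negation. -/
noncomputable def D5 : Subgroup (Equiv.Perm (ZMod 5)) :=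
  Subgroup.closure {Equiv.addLeft (1 : ZMod 5), Equiv.neg (ZMod 5)}

/-- The Frobenius group of order 20 in `Perm (ZMod 5)`, generated by translation and
multiplication by the unit 2. -/
noncomputable def F20 : Subgroup (Equiv.Perm (ZMod 5)) :=
  Subgroup.closure {Equiv.addLeft (1 : ZMod 5),
    Equiv.mulLeft₀ (2 : ZMod 5) (by decide)}

/-- `G` is conjugate (in `Perm (ZMod 5)`) to the subgroup `H`. -/
def ConjTo (G H : Subgroup (Equiv.Perm (ZMod 5))) : Prop :=
  ∃ x : Equiv.Perm (ZMod 5), Subgroup.map (MulAut.conj x).toMonoidHom H = G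

section Aux

set_option maxRecDepth 100000
set_option maxHeartbeats 4000000
set_option linter.unusedVariables false

private def aa : Perm (ZMod 5) := Equiv.addLeft 1
private def bb : Perm (ZMod 5) := Equiv.mulLeft₀ (2 : ZMod 5) (by decide)
private def cc : Perm (ZMod 5) := Equiv.neg (ZMod 5)

private def pC5 (g : Perm (ZMod 5)) : Prop := ∀ x, g x = x + g 0
private def pF20 (g : Perm (ZMod 5)) : Prop := ∀ x, g x = (g 1 - g 0) * x + g 0
private def pD5 (g : Perm (ZMod 5)) : Prop := pF20 g ∧ (g 1 - g 0) ^ 2 = 1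

private instance : DecidablePred pC5 := fun _ => inferInstanceAs (Decidable (∀ x, _))
private instance : DecidablePred pF20 := fun _ => inferInstanceAs (Decidable (∀ x, _))
private instance : DecidablePred pD5 := fun _ => inferInstanceAs (Decidable (_ ∧ _))

private lemma mulC5 : ∀ g h, pC5 g → pC5 h → pC5 (g * h) := by decide
private lemma invC5 : ∀ g, pC5 g → pC5 g⁻¹ := by decide
private lemma mulD5 : ∀ g h, pD5 g → pD5 h → pD5 (g * h) := by decide
private lemma invD5 : ∀ g, pD5 g → pD5 g⁻¹ := by decide
private lemma mulF20 : ∀ g h, pF20 g → pF20 h → pF20 (g * h) := by decide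
private lemma invF20 : ∀ g, pF20 g → pF20 g⁻¹ := by decide
private lemma dC5list : ∀ g, pC5 g → ∃ i ∈ Finset.range 5, g = aa ^ i := by decide
private lemma dD5list : ∀ g, pD5 g → ∃ i ∈ Finset.range 5, ∃ j ∈ Finset.range 2,
    g = aa ^ i * cc ^ j := by decide
private lemma dF20list : ∀ g, pF20 g → ∃ i ∈ Finset.range 5, ∃ j ∈ Finset.range 4,
    g = aa ^ i * bb ^ j := by decide
private lemma dnorm : ∀ g, (∀ n, pC5 n → pC5 (g * n * g⁻¹)) → pF20 g := by decide
private lemma dord : ∀ g, pF20 g → ¬ pD5 g → g ^ 10 ≠ 1 := by decide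

private def C5' : Subgroup (Perm (ZMod 5)) where
  carrier := {g | pC5 g}
  one_mem' := by decide
  mul_mem' := fun {g h} hg hh => mulC5 g h hg hh
  inv_mem' := fun {g} hg => invC5 g hg

private def D5' : Subgroup (Perm (ZMod 5)) where
  carrier := {g | pD5 g}
  one_mem' := by decide
  mul_mem' := fun {g h} hg hh => mulD5 g h hg hh
  inv_mem' := fun {g} hg => invD5 g hg

private def F20' : Subgroup (Perm (ZMod 5)) where
  carrier := {g | pF20 g}
  one_mem' := by decide
  mul_mem' := fun {g h} hg hh => mulF20 g h hg hh
  inv_mem' := fun {g} hg => invF20 g hg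

private lemma mem_C5' {g : Perm (ZMod 5)} : g ∈ C5' ↔ pC5 g := Iff.rfl
private lemma mem_D5' {g : Perm (ZMod 5)} : g ∈ D5' ↔ pD5 g := Iff.rfl
private lemma mem_F20' {g : Perm (ZMod 5)} : g ∈ F20' ↔ pF20 g := Iff.rfl


private lemma helperD5 (i j : ℕ) : aa ^ i * cc ^ j ∈ D5 := by
  have h1 : aa ∈ D5 := Subgroup.subset_closure (Set.mem_insert _ _)
  have h2 : cc ∈ D5 := Subgroup.subset_closure (Set.mem_insert_of_mem _ rfl)
  exact Subgroup.mul_mem _ (Subgroup.pow_mem _ h1 i) (Subgroup.pow_mem _ h2 j)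

private lemma helperF20 (i j : ℕ) : aa ^ i * bb ^ j ∈ F20 := by
  have h1 : aa ∈ F20 := Subgroup.subset_closure (Set.mem_insert _ _)
  have h2 : bb ∈ F20 := Subgroup.subset_closure (Set.mem_insert_of_mem _ rfl)
  exact Subgroup.mul_mem _ (Subgroup.pow_mem _ h1 i) (Subgroup.pow_mem _ h2 j)

private lemma hC5eq : C5 = C5' := by
  apply le_antisymm
  · exact Subgroup.zpowers_le.2 (mem_C5'.2 (by decide))
  · intro g hg
    obtain ⟨i, _, rfl⟩ := dC5list g (mem_C5'.1 hg)
    exact Subgroup.pow_mem _ (Subgroup.mem_zpowers aa) i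

private lemma hD5eq : D5 = D5' := by
  apply le_antisymm
  · apply (Subgroup.closure_le _).2
    rintro g (rfl | rfl)
    · exact mem_D5'.2 (by decide)
    · exact mem_D5'.2 (by decide)
  · intro g hg
    obtain ⟨i, _, j, _, hgeq⟩ := dD5list g (mem_D5'.1 hg)
    rw [hgeq]
    exact helperD5 i j

private lemma hF20eq : F20 = F20' := by
  apply le_antisymm
  · apply (Subgroup.closure_le _).2
    rintro g (rfl | rfl)
    · exact mem_F20'.2 (by decide)
    · exact mem_F20'.2 (by decide)
  · intro g hg
    obtain ⟨i, _, j, _, hgeq⟩ := dF20list g (mem_F20'.1 hg)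
    rw [hgeq]
    exact helperF20 i j

private lemma cardPerm : Nat.card (Perm (ZMod 5)) = 120 := by
  rw [Nat.card_eq_fintype_card, Fintype.card_perm, ZMod.card]
  decide

private lemma orderaa : orderOf aa = 5 := orderOf_eq_prime (by decide) (by decide)

private lemma cardC5 : Nat.card C5 = 5 := by
  show Nat.card (Subgroup.zpowers aa) = 5
  rw [Nat.card_zpowers, orderaa]

private lemma cardD5' : Nat.card D5' = 10 := by
  have h : Nat.card D5' = Nat.card {g : Perm (ZMod 5) // pD5 g} :=
    Nat.card_congr (Equiv.subtypeEquivRight (fun _ => mem_D5'))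
  rw [h, Nat.card_eq_fintype_card]
  decide

private lemma cardF20' : Nat.card F20' = 20 := by
  have h : Nat.card F20' = Nat.card {g : Perm (ZMod 5) // pF20 g} :=
    Nat.card_congr (Equiv.subtypeEquivRight (fun _ => mem_F20'))
  rw [h, Nat.card_eq_fintype_card]
  decide

private lemma cardA5 : Nat.card (alternatingGroup (ZMod 5)) = 60 := by
  have h := two_mul_card_alternatingGroup (α := ZMod 5)
  rw [Fintype.card_perm, ZMod.card, ← Nat.card_eq_fintype_card,
    show Nat.factorial 5 = 120 from rfl] at h
  omega

private lemma cardPermNat (β : Type) [Finite β] :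
    Nat.card (Perm β) = (Nat.card β).factorial := by
  classical
  haveI := Fintype.ofFinite β
  rw [Nat.card_eq_fintype_card, Nat.card_eq_fintype_card, Fintype.card_perm]

private lemma le_F20' (G : Subgroup (Perm (ZMod 5))) (ha : aa ∈ G)
    (hfac : (Nat.card G).factorization 5 = 1)
    (hn : Nat.card G = 10 ∨ Nat.card G = 15 ∨ Nat.card G = 20 ∨ Nat.card G = 40) :
    G ≤ F20' := by
  set aG : ↥G := ⟨aa, ha⟩ with haG
  have hord : orderOf aG = 5 := by
    have h3 := orderOf_injective G.subtype Subtype.coe_injective aG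
    rw [← h3]; exact orderaa
  have hcardP : Nat.card (Subgroup.zpowers aG) = 5 := by rw [Nat.card_zpowers, hord]
  let S : Sylow 5 ↥G := Sylow.ofCard (Subgroup.zpowers aG) (by rw [hcardP, hfac, pow_one])
  have hSC : (S : Subgroup ↥G) = Subgroup.zpowers aG := rfl
  have hcardS : Nat.card (S : Subgroup ↥G) = 5 := by rw [hSC]; exact hcardP
  have hidx : (S : Subgroup ↥G).index * 5 = Nat.card ↥G := by
    have h := Subgroup.card_mul_index (S : Subgroup ↥G)
    rw [hcardS] at h; omega
  have hdvd : Nat.card (Sylow 5 ↥G) ∣ (S : Subgroup ↥G).index := Sylow.card_dvd_index S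
  have hmod : Nat.card (Sylow 5 ↥G) % 5 = 1 % 5 := card_sylow_modEq_one 5 ↥G
  have h1 : Nat.card (Sylow 5 ↥G) = 1 := by
    have hile : (S : Subgroup ↥G).index ≤ 8 := by omega
    have hle : Nat.card (Sylow 5 ↥G) ≤ 8 := le_trans (Nat.le_of_dvd (by omega) hdvd) hile
    interval_cases h : Nat.card (Sylow 5 ↥G) <;> omega
  haveI : Subsingleton (Sylow 5 ↥G) := (Nat.card_eq_one_iff_unique.1 h1).1
  have hnorm : (Subgroup.zpowers aG).Normal := by
    rw [← hSC, ← Subgroup.normalizer_eq_top_iff, eq_top_iff]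
    intro g _
    exact Sylow.smul_eq_iff_mem_normalizer.1 (Subsingleton.elim _ _)
  intro g hg
  rw [mem_F20']
  apply dnorm
  intro m hm
  have hmC5 : m ∈ C5 := by rw [hC5eq]; exact mem_C5'.2 hm
  obtain ⟨k, hk⟩ := Subgroup.mem_zpowers_iff.1 hmC5
  have hmG : m ∈ G := by
    rw [← hk]; exact Subgroup.zpow_mem _ ha k
  have hmem : (⟨m, hmG⟩ : ↥G) ∈ Subgroup.zpowers aG := by
    refine Subgroup.mem_zpowers_iff.2 ⟨k, ?_⟩
    ext1
    push_cast
    exact hk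
  have h2 := hnorm.conj_mem _ hmem ⟨g, hg⟩
  obtain ⟨j, hj⟩ := Subgroup.mem_zpowers_iff.1 h2
  have h3 : aa ^ j = g * m * g⁻¹ := by
    have h4 := congrArg (Subtype.val) hj
    push_cast at h4
    exact h4
  have h4 : aa ^ j ∈ C5 := Subgroup.zpow_mem _ (Subgroup.mem_zpowers aa) j
  rw [hC5eq] at h4
  rw [← h3]
  exact mem_C5'.1 h4

private lemma fac10 : (10:ℕ).factorization 5 = 1 := by
  rw [show (10:ℕ) = 2 * 5 by norm_num, Nat.factorization_mul (by norm_num) (by norm_num)]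
  simp [Nat.Prime.factorization (by norm_num : Nat.Prime 2),
    Nat.Prime.factorization (by norm_num : Nat.Prime 5)]

private lemma fac15 : (15:ℕ).factorization 5 = 1 := by
  rw [show (15:ℕ) = 3 * 5 by norm_num, Nat.factorization_mul (by norm_num) (by norm_num)]
  simp [Nat.Prime.factorization (by norm_num : Nat.Prime 3),
    Nat.Prime.factorization (by norm_num : Nat.Prime 5)]

private lemma fac20 : (20:ℕ).factorization 5 = 1 := by
  rw [show (20:ℕ) = 4 * 5 by norm_num, Nat.factorization_mul (by norm_num) (by norm_num),
    show (4:ℕ) = 2^2 by norm_num, Nat.Prime.factorization_pow (by norm_num)]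
  simp [Nat.Prime.factorization (by norm_num : Nat.Prime 5)]

private lemma fac40 : (40:ℕ).factorization 5 = 1 := by
  rw [show (40:ℕ) = 8 * 5 by norm_num, Nat.factorization_mul (by norm_num) (by norm_num),
    show (8:ℕ) = 2^3 by norm_num, Nat.Prime.factorization_pow (by norm_num)]
  simp [Nat.Prime.factorization (by norm_num : Nat.Prime 5)]

private lemma idxA5 : (alternatingGroup (ZMod 5)).index = 2 := by
  have h := Subgroup.card_mul_index (alternatingGroup (ZMod 5))
  rw [cardA5, cardPerm] at h
  omega

private lemma no_small_index (L : Subgroup (alternatingGroup (ZMod 5)))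
    (hidx : L.index = 2 ∨ L.index = 4) : False := by
  haveI : IsSimpleGroup ↥(alternatingGroup (ZMod 5)) := alternatingGroup.isSimpleGroup_five
  rcases (Subgroup.normalCore_normal L).eq_bot_or_eq_top with hbot | htop
  · rw [Subgroup.normalCore_eq_ker, MonoidHom.ker_eq_bot_iff] at hbot
    have hdvd := Subgroup.card_dvd_of_injective _ hbot
    rw [cardA5, cardPermNat] at hdvd
    have hq : Nat.card (↥(alternatingGroup (ZMod 5)) ⧸ L) = L.index := rfl
    rw [hq] at hdvd
    rcases hidx with h | h <;> rw [h] at hdvd <;> norm_num [Nat.factorial] at hdvd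
  · have hLtop : L = ⊤ := top_le_iff.1 (htop ▸ L.normalCore_le)
    rw [hLtop, Subgroup.index_top] at hidx
    omega

private lemma main5 (G : Subgroup (Perm (ZMod 5))) (ha : aa ∈ G) :
    G = C5 ∨ G = D5 ∨ G = F20 ∨ G = alternatingGroup (ZMod 5) ∨ G = ⊤ := by
  have hC5G : C5 ≤ G := by
    show Subgroup.zpowers aa ≤ G
    exact Subgroup.zpowers_le.2 ha
  have h5n : (5:ℕ) ∣ Nat.card G := by
    have h := Subgroup.card_dvd_of_le hC5G
    rwa [cardC5] at h
  have hn120 : Nat.card G ∣ 120 := cardPerm ▸ Subgroup.card_subgroup_dvd_card G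
  have hnpos : 0 < Nat.card G := Nat.card_pos
  have hcase : Nat.card G = 5 ∨ Nat.card G = 10 ∨ Nat.card G = 15 ∨ Nat.card G = 20 ∨
      Nat.card G = 30 ∨ Nat.card G = 40 ∨ Nat.card G = 60 ∨ Nat.card G = 120 := by
    have h120 : Nat.card G ≤ 120 := Nat.le_of_dvd (by norm_num) hn120
    interval_cases h : Nat.card G <;> omega
  rcases hcase with hn | hn | hn | hn | hn | hn | hn | hn
  · -- order 5 : C5
    left
    exact (Subgroup.eq_of_le_of_card_ge hC5G (by rw [cardC5, hn])).symm
  · -- order 10 : D5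
    right; left
    have hle := le_F20' G ha (by rw [hn]; exact fac10) (by omega)
    have hleD : G ≤ D5' := by
      intro g hg
      rw [mem_D5']
      by_contra hD
      have h10 : g ^ 10 = 1 := by
        have h := pow_card_eq_one' (G := ↥G) (x := ⟨g, hg⟩)
        rw [hn] at h
        have h2 := congrArg (Subtype.val) h
        push_cast at h2
        exact h2
      exact dord g (mem_F20'.1 (hle hg)) hD h10
    rw [hD5eq]
    exact Subgroup.eq_of_le_of_card_ge hleD (by rw [cardD5', hn])
  · -- order 15 : impossible
    exfalso
    have hle := le_F20' G ha (by rw [hn]; exact fac15) (by omega)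
    have h := Subgroup.card_dvd_of_le hle
    rw [hn, cardF20'] at h
    norm_num at h
  · -- order 20 : F20
    right; right; left
    have hle := le_F20' G ha (by rw [hn]; exact fac20) (by omega)
    rw [hF20eq]
    exact Subgroup.eq_of_le_of_card_ge hle (by rw [cardF20', hn])
  · -- order 30 : impossible
    exfalso
    have hrel : (alternatingGroup (ZMod 5)).relIndex G ∣ 2 :=
      idxA5 ▸ Subgroup.relIndex_dvd_index_of_normal (alternatingGroup (ZMod 5)) G
    have hcardrel := Subgroup.card_mul_index ((alternatingGroup (ZMod 5)).subgroupOf G)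
    rw [hn] at hcardrel
    have hrelv : (alternatingGroup (ZMod 5)).relIndex G = 1 ∨
        (alternatingGroup (ZMod 5)).relIndex G = 2 := (Nat.dvd_prime Nat.prime_two).1 hrel
    have hrelidx : ((alternatingGroup (ZMod 5)).subgroupOf G).index =
        (alternatingGroup (ZMod 5)).relIndex G := rfl
    have hm : Nat.card ((alternatingGroup (ZMod 5)).subgroupOf G) = 15 ∨
        Nat.card ((alternatingGroup (ZMod 5)).subgroupOf G) = 30 := by
      rw [hrelidx] at hcardrel
      rcases hrelv with h | h <;> rw [h] at hcardrel <;> omega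
    -- identify with the subgroup G ⊓ A5 of A5
    have hcard1 : Nat.card ((alternatingGroup (ZMod 5)).subgroupOf G) =
        Nat.card ((alternatingGroup (ZMod 5)) ⊓ G : Subgroup (Perm (ZMod 5))) := by
      rw [← Subgroup.inf_subgroupOf_right]
      exact Nat.card_congr (Subgroup.subgroupOfEquivOfLe inf_le_right).toEquiv
    set L : Subgroup (alternatingGroup (ZMod 5)) :=
      G.subgroupOf (alternatingGroup (ZMod 5)) with hL
    have hcard2 : Nat.card L =
        Nat.card ((G ⊓ alternatingGroup (ZMod 5)) : Subgroup (Perm (ZMod 5))) := by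
      rw [hL, ← Subgroup.inf_subgroupOf_right]
      exact Nat.card_congr (Subgroup.subgroupOfEquivOfLe inf_le_right).toEquiv
    have hcardL : Nat.card L = 15 ∨ Nat.card L = 30 := by
      rw [hcard2, inf_comm, ← hcard1]
      exact hm
    have hcardidxL := Subgroup.card_mul_index L
    rw [cardA5] at hcardidxL
    refine no_small_index L ?_
    rcases hcardL with h | h <;> rw [h] at hcardidxL <;> omega
  · -- order 40 : impossible
    exfalso
    have hle := le_F20' G ha (by rw [hn]; exact fac40) (by omega)
    have h := Subgroup.card_dvd_of_le hle
    rw [hn, cardF20'] at h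
    norm_num at h
  · -- order 60 : A5
    right; right; right; left
    have hidx2 : G.index = 2 := by
      have h := Subgroup.card_mul_index G
      rw [hn, cardPerm] at h
      omega
    have hA5le : alternatingGroup (ZMod 5) ≤ G := by
      rw [← Equiv.Perm.closure_three_cycles_eq_alternating]
      refine (Subgroup.closure_le _).2 ?_
      intro σ hσ
      have h3 : σ ^ 3 = 1 := by
        rw [← Equiv.Perm.IsThreeCycle.orderOf hσ]
        exact pow_orderOf_eq_one σ
      have hσ4 : σ = (σ ^ 2) ^ 2 := by
        rw [← pow_mul]
        calc σ = σ ^ 3 * σ := by rw [h3, one_mul]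
        _ = σ ^ 4 := by rw [← pow_succ]
      rw [hσ4]
      exact Subgroup.sq_mem_of_index_two hidx2 _
    exact (Subgroup.eq_of_le_of_card_ge hA5le (by rw [cardA5, hn])).symm
  · -- order 120 : ⊤
    right; right; right; right
    exact Subgroup.eq_top_of_card_eq G (by rw [hn, cardPerm])

private lemma dpowval : ∀ y : ZMod 5, (aa ^ y.val) 0 = y := by decide

private lemma cycleTypeaa : aa.cycleType = {5} := by
  have hc : aa.IsCycle := by
    refine ⟨0, by decide, fun y hy => ⟨(y.val : ℤ), ?_⟩⟩
    rw [zpow_natCast]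
    exact dpowval y
  rw [hc.cycleType, show aa.support.card = 5 by decide]

end Aux

theorem stmt_4 (G : Subgroup (Equiv.Perm (ZMod 5)))
    (htrans : MulAction.IsPretransitive G (ZMod 5))
    (hcycle : ∃ σ ∈ G, σ.cycleType = {5}) :
    ConjTo G C5 ∨ ConjTo G D5 ∨ ConjTo G F20 ∨
      G = alternatingGroup (ZMod 5) ∨ G = ⊤ := by
  obtain ⟨σ, hσG, hσT⟩ := hcycle
  have hconj : IsConj aa σ :=
    Equiv.Perm.isConj_iff_cycleType_eq.2 (by rw [cycleTypeaa, hσT])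
  obtain ⟨c, hc2⟩ := isConj_iff.1 hconj
  set f : Perm (ZMod 5) →* Perm (ZMod 5) := (MulAut.conj c).toMonoidHom with hf
  set finv : Perm (ZMod 5) →* Perm (ZMod 5) := (MulAut.conj c⁻¹).toMonoidHom with hfinv
  have happ : ∀ g, f g = c * g * c⁻¹ := fun g => rfl
  have happinv : ∀ g, finv g = c⁻¹ * g * c := by
    intro g
    show c⁻¹ * g * c⁻¹⁻¹ = c⁻¹ * g * c
    rw [inv_inv]
  have hmapmap : ∀ H : Subgroup (Perm (ZMod 5)),
      Subgroup.map f (Subgroup.map finv H) = H := by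
    intro H
    rw [Subgroup.map_map]
    have hcomp : f.comp finv = MonoidHom.id _ := by
      refine MonoidHom.ext fun g => ?_
      show f (finv g) = g
      rw [happinv, happ]
      group
    rw [hcomp, Subgroup.map_id]
  have ha' : aa ∈ Subgroup.map finv G := by
    refine ⟨σ, hσG, ?_⟩
    rw [happinv, ← hc2]
    group
  rcases main5 _ ha' with h | h | h | h | h
  · exact Or.inl ⟨c, by rw [← h, hmapmap]⟩
  · exact Or.inr (Or.inl ⟨c, by rw [← h, hmapmap]⟩)
  · exact Or.inr (Or.inr (Or.inl ⟨c, by rw [← h, hmapmap]⟩))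
  · refine Or.inr (Or.inr (Or.inr (Or.inl ?_)))
    have hG : Subgroup.map f (alternatingGroup (ZMod 5)) = G := by rw [← h, hmapmap]
    rw [← hG]
    apply le_antisymm
    · rintro g ⟨x, hx, rfl⟩
      rw [happ]
      exact (alternatingGroup.normal (α := ZMod 5)).conj_mem x hx c
    · intro g hg
      refine ⟨c⁻¹ * g * c, ?_, ?_⟩
      · have := (alternatingGroup.normal (α := ZMod 5)).conj_mem g hg c⁻¹
        simpa [mul_assoc] using this
      · rw [happ]
        group
  · refine Or.inr (Or.inr (Or.inr (Or.inr ?_)))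
    have hG : Subgroup.map f ⊤ = G := by rw [← h, hmapmap]
    rw [← hG]
    rw [Subgroup.map_top_of_surjective]
    intro g
    exact ⟨c⁻¹ * g * c, by rw [happ]; group⟩
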